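/- arXiv:2501.02249 — 3 statements merged into one kernel-verified Lean document; each statement's English description precedes it below -/
import Mathlib

section
/- Let n ≥ 3 and s ≥ 2 be integers with n prime, and let q be a prime such that (s^n − 1)/(s − 1) = q^2. Then n = 5, s = 3, and q = 11. -/
namespace NL7

/-- Pell pair sequence for the equation (a+1)u² = a y² + 1. -/
def P (a : ℕ) : ℕ → ℕ × ℕ
  | 0 => (1, 1)
  | k+1 => ((2*a+1)*(P a k).1 + 2*a*(P a k).2, (2*a+2)*(P a k).1 + (2*a+1)*(P a k).2)

def U (a k : ℕ) : ℕ := (P a k).1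
def Yv (a k : ℕ) : ℕ := (P a k).2

@[simp] lemma U_zero (a : ℕ) : U a 0 = 1 := rfl
@[simp] lemma Yv_zero (a : ℕ) : Yv a 0 = 1 := rfl
lemma U_succ (a k : ℕ) : U a (k+1) = (2*a+1)*(U a k) + 2*a*(Yv a k) := rfl
lemma Yv_succ (a k : ℕ) : Yv a (k+1) = (2*a+2)*(U a k) + (2*a+1)*(Yv a k) := rfl

lemma pell (a k : ℕ) : (a+1) * (U a k)^2 = a * (Yv a k)^2 + 1 := by
  induction k with
  | zero => simp
  | succ k ih =>
    rw [U_succ, Yv_succ]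
    zify at ih ⊢
    linear_combination ih

lemma U_pos (a k : ℕ) : 1 ≤ U a k := by
  induction k with
  | zero => simp
  | succ k ih => rw [U_succ]; nlinarith

lemma Yv_ge_U (a k : ℕ) : U a k ≤ Yv a k := by
  induction k with
  | zero => simp
  | succ k ih => rw [U_succ, Yv_succ]; nlinarith [U_pos a k]

lemma U_step_ge (a k : ℕ) : (4*a+1) * U a k ≤ U a (k+1) := by
  rw [U_succ]; nlinarith [Yv_ge_U a k]

lemma U_ge_pow (a k : ℕ) : (4*a+1)^k ≤ U a k := by
  induction k with
  | zero => simp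
  | succ k ih =>
    calc (4*a+1)^(k+1) = (4*a+1) * (4*a+1)^k := by ring
    _ ≤ (4*a+1) * U a k := Nat.mul_le_mul_left _ ih
    _ ≤ U a (k+1) := U_step_ge a k

lemma U_odd (a k : ℕ) : U a k % 2 = 1 := by
  induction k with
  | zero => simp
  | succ k ih =>
    have h1 : (2*a+1) % 2 = 1 := by omega
    have h2 : (2*a) % 2 = 0 := by omega
    rw [U_succ, Nat.add_mod, Nat.mul_mod, Nat.mul_mod (2*a), h1, h2, ih]; norm_num

/-- coefficients of ε^b = C + E·√(a(a+1)) -/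
def CE (a : ℕ) : ℕ → ℕ × ℕ
  | 0 => (1, 0)
  | b+1 => ((2*a+1)*(CE a b).1 + 2*a*(a+1)*(CE a b).2, 2*(CE a b).1 + (2*a+1)*(CE a b).2)

def Cc (a b : ℕ) : ℕ := (CE a b).1
def Ec (a b : ℕ) : ℕ := (CE a b).2

@[simp] lemma Cc_zero (a : ℕ) : Cc a 0 = 1 := rfl
@[simp] lemma Ec_zero (a : ℕ) : Ec a 0 = 0 := rfl
lemma Cc_succ (a b : ℕ) : Cc a (b+1) = (2*a+1)*(Cc a b) + 2*a*(a+1)*(Ec a b) := rfl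
lemma Ec_succ (a b : ℕ) : Ec a (b+1) = 2*(Cc a b) + (2*a+1)*(Ec a b) := rfl

lemma addition (a i b : ℕ) :
    U a (i+b) = U a i * Cc a b + a * Yv a i * Ec a b ∧
    Yv a (i+b) = Yv a i * Cc a b + (a+1) * U a i * Ec a b := by
  induction b with
  | zero => simp
  | succ b ih =>
    obtain ⟨h1, h2⟩ := ih
    have e1 : i + (b+1) = (i+b) + 1 := by omega
    rw [e1, U_succ, Yv_succ, h1, h2, Cc_succ, Ec_succ]
    constructor <;> ring

lemma duplication (a k : ℕ) :
    Cc a (2*k+1) = 2*a*(Yv a k)^2 + 1 ∧ Ec a (2*k+1) = 2 * U a k * Yv a k := by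
  induction k with
  | zero =>
    refine ⟨?_, ?_⟩
    · show (CE a 1).1 = _; simp [CE]
    · show (CE a 1).2 = _; simp [CE]
  | succ k ih =>
    obtain ⟨h1, h2⟩ := ih
    have e1 : 2*(k+1)+1 = (2*k+1) + 1 + 1 := by omega
    have hp := pell a k
    have c2 : Cc a (2*k+1+1) = (2*a+1)*(Cc a (2*k+1)) + 2*a*(a+1)*(Ec a (2*k+1)) := Cc_succ a _
    have e2 : Ec a (2*k+1+1) = 2*(Cc a (2*k+1)) + (2*a+1)*(Ec a (2*k+1)) := Ec_succ a _
    have c3 : Cc a (2*k+1+1+1) = (2*a+1)*(Cc a (2*k+1+1)) + 2*a*(a+1)*(Ec a (2*k+1+1)) := Cc_succ a _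
    have e3 : Ec a (2*k+1+1+1) = 2*(Cc a (2*k+1+1)) + (2*a+1)*(Ec a (2*k+1+1)) := Ec_succ a _
    rw [e1, c3, e3, c2, e2, h1, h2, U_succ, Yv_succ]
    constructor
    · zify at hp ⊢; linear_combination (-8*(a:ℤ)^2-8*a)*hp
    · zify at hp ⊢; linear_combination (-8*(a:ℤ)-4)*hp

lemma composition (a k j : ℕ) :
    U a ((2*j+1)*k + j) = U a k * U (a*(Yv a k)^2) j ∧
    Yv a ((2*j+1)*k + j) = Yv a k * Yv (a*(Yv a k)^2) j := by
  induction j with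
  | zero => simp
  | succ j ih =>
    obtain ⟨h1, h2⟩ := ih
    have e1 : (2*(j+1)+1)*k + (j+1) = ((2*j+1)*k + j) + (2*k+1) := by ring
    obtain ⟨a1, a2⟩ := addition a ((2*j+1)*k + j) (2*k+1)
    obtain ⟨d1, d2⟩ := duplication a k
    have hp := pell a k
    have hz : a*(Yv a k)^2 + 1 = (a+1)*(U a k)^2 := by omega
    rw [e1, a1, a2, h1, h2, d1, d2, U_succ, Yv_succ]
    constructor
    · zify; ring
    · zify at hp ⊢; linear_combination (2*(Yv a k:ℤ)*(U (a*(Yv a k)^2) j))*hp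

lemma modx (a k : ℕ) :
    ((a:ℤ)+1) ∣ ((U a k : ℤ) - (-1)^k*(2*k+1)) ∧ ((a:ℤ)+1) ∣ ((Yv a k : ℤ) - (-1)^k) := by
  induction k with
  | zero => simp
  | succ k ih =>
    obtain ⟨⟨t1, h1⟩, ⟨t2, h2⟩⟩ := ih
    constructor
    · refine ⟨(2*a+1)*t1 + 2*a*t2 + (-1)^k*(4*k+4), ?_⟩
      have := U_succ a k
      zify at this
      rw [this]
      push_cast
      linear_combination (2*(a:ℤ)+1)*h1 + 2*(a:ℤ)*h2
    · refine ⟨(2*a+2)*t1 + (2*a+1)*t2 + (-1)^k*(4*k+4), ?_⟩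
      have := Yv_succ a k
      zify at this
      rw [this]
      push_cast
      linear_combination (2*(a:ℤ)+2)*h1 + (2*(a:ℤ)+1)*h2

lemma Urec2 (a k : ℕ) : (U a (k+2) : ℤ) = (4*(a:ℤ)+2)*(U a (k+1)) - U a k := by
  have h1 := U_succ a k
  have h2 := U_succ a (k+1)
  have h3 := Yv_succ a k
  zify at h1 h2 h3
  rw [h2, h3, h1]
  ring

lemma factB (a : ℕ) : ∀ j : ℕ,
    ((a:ℤ)+1)^2 ∣ 3*(U a j : ℤ) - (-1)^j*(2*j+1)*(3 - 2*j*(j+1)*((a:ℤ)+1)) := by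
  have key : ∀ j : ℕ,
      (((a:ℤ)+1)^2 ∣ 3*(U a j : ℤ) - (-1)^j*(2*j+1)*(3 - 2*j*(j+1)*((a:ℤ)+1))) ∧
      (((a:ℤ)+1)^2 ∣ 3*(U a (j+1) : ℤ) - (-1)^(j+1)*(2*(j+1)+1)*(3 - 2*(j+1)*(j+2)*((a:ℤ)+1))) := by
    intro j
    induction j with
    | zero =>
      constructor
      · simp
      · refine ⟨0, ?_⟩
        have : (U a 1 : ℤ) = 4*(a:ℤ)+1 := by
          have := U_succ a 0; zify at this; rw [this]; simp; ring
        rw [this]; ring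
    | succ j ih =>
      obtain ⟨⟨t1, h1⟩, ⟨t2, h2⟩⟩ := ih
      refine ⟨⟨t2, h2⟩, ⟨(4*(a:ℤ)+2)*t2 - t1 + (-1)^j*8*(j+1)*(j+2)*(2*j+3), ?_⟩⟩
      rw [Urec2 a j]
      push_cast at h1 h2 ⊢
      linear_combination (4*(a:ℤ)+2)*h2 - h1
  exact fun j => (key j).1

lemma y_eq_one {a u y : ℕ} (ha : 1 ≤ a) (hy : 1 ≤ y)
    (heq : (a+1) * u^2 = a * y^2 + 1) (hu : u = 1) : y = 1 := by
  subst hu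
  by_contra hne
  have h2 : 2 ≤ y := by omega
  have h4 : 4 ≤ y^2 := by nlinarith
  have h5 : a*4 ≤ a*y^2 := Nat.mul_le_mul_left a h4
  have h6 : (a+1)*1^2 = a + 1 := by ring
  linarith

lemma y_gt_u {a u y : ℕ} (ha : 1 ≤ a) (hu : 2 ≤ u) (hy : 1 ≤ y)
    (heq : (a+1) * u^2 = a * y^2 + 1) : u + 1 ≤ y := by
  by_contra hc
  push_neg at hc
  have hle : y ≤ u := by omega
  have h1 : a*y^2 ≤ a*u^2 := Nat.mul_le_mul_left a (Nat.pow_le_pow_left hle 2)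
  have h4 : 4 ≤ u^2 := by nlinarith
  have h6 : (a+1)*u^2 = a*u^2 + u^2 := by ring
  linarith

lemma classify (a : ℕ) (ha : 1 ≤ a) :
    ∀ u : ℕ, ∀ y : ℕ, 1 ≤ u → 1 ≤ y → (a+1) * u^2 = a * y^2 + 1 →
    ∃ k, u = U a k ∧ y = Yv a k := by
  intro u
  induction u using Nat.strong_induction_on with
  | _ u IH =>
    intro y hu hy heq
    rcases eq_or_lt_of_le hu with h1 | h2
    · have hu1 : u = 1 := h1.symm
      have hy1 : y = 1 := y_eq_one ha hy heq hu1
      exact ⟨0, by simp [hu1, hy1]⟩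
    · have hu2 : 2 ≤ u := h2
      have hyu : u + 1 ≤ y := y_gt_u ha hu2 hy heq
      have heqz : ((a:ℤ)+1) * (u:ℤ)^2 = (a:ℤ) * (y:ℤ)^2 + 1 := by exact_mod_cast heq
      set u' : ℤ := (2*(a:ℤ)+1)*(u:ℤ) - 2*(a:ℤ)*(y:ℤ) with hu'
      set y' : ℤ := (2*(a:ℤ)+1)*(y:ℤ) - (2*(a:ℤ)+2)*(u:ℤ) with hy'
      have hsq : ((2*(a:ℤ)+1)*(u:ℤ))^2 - (2*(a:ℤ)*(y:ℤ))^2 = (u:ℤ)^2 + 4*(a:ℤ) := by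
        linear_combination 4*(a:ℤ)*heqz
      have hupos : 1 ≤ u' := by
        rcases le_or_gt ((2*(a:ℤ)+1)*(u:ℤ)) (2*(a:ℤ)*(y:ℤ)) with h | h
        · nlinarith
        · omega
      have hult : u' < (u:ℤ) := by
        have he : (u:ℤ) - u' = 2*(a:ℤ)*((y:ℤ) - (u:ℤ)) := by rw [hu']; ring
        have hyu' : (u:ℤ) + 1 ≤ (y:ℤ) := by exact_mod_cast hyu
        nlinarith
      have heq' : ((a:ℤ)+1) * u'^2 = (a:ℤ) * y'^2 + 1 := by
        rw [hu', hy']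
        linear_combination heqz
      have hy'ne : y' ≠ 0 := by
        intro h0
        rw [h0] at heq'
        nlinarith
      set un : ℕ := u'.toNat with hun
      set yn : ℕ := y'.natAbs with hyn
      have hunz : (un:ℤ) = u' := Int.toNat_of_nonneg (by omega)
      have hynz : ((yn:ℤ))^2 = y'^2 := by rw [hyn, Int.natAbs_sq]
      have hun1 : 1 ≤ un := by omega
      have hyn1 : 1 ≤ yn := by
        rcases Nat.eq_zero_or_pos yn with h | h
        · exfalso; apply hy'ne; rw [hyn] at h; exact Int.natAbs_eq_zero.mp h
        · exact h
      have hunlt : un < u := by omega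
      have heqn : (a+1) * un^2 = a * yn^2 + 1 := by
        have : ((a:ℤ)+1) * (un:ℤ)^2 = (a:ℤ) * (yn:ℤ)^2 + 1 := by
          rw [hunz, hynz]; exact heq'
        exact_mod_cast this
      obtain ⟨j, hj1, hj2⟩ := IH un hunlt yn hun1 hyn1 heqn
      have hrecu : (u:ℤ) = (2*(a:ℤ)+1)*u' + 2*(a:ℤ)*y' := by rw [hu', hy']; ring
      have hrecy : (y:ℤ) = (2*(a:ℤ)+2)*u' + (2*(a:ℤ)+1)*y' := by rw [hu', hy']; ring
      rcases lt_or_gt_of_ne hy'ne with hneg | hpos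
      · exfalso
        have hyval : y' = -(yn:ℤ) := by
          rw [hyn]; rcases Int.natAbs_eq y' with h | h <;> omega
        have hun2 : un = 1 ∨ 2 ≤ un := by omega
        rcases hun2 with h | h
        · have hy1 : yn = 1 := y_eq_one ha hyn1 heqn h
          have hcast1 : (un:ℤ) = 1 := by exact_mod_cast h
          have hcast2 : (yn:ℤ) = 1 := by exact_mod_cast hy1
          have hue : (u:ℤ) = 1 := by
            rw [hrecu, hyval, ← hunz, hcast1, hcast2]; ring
          omega
        · have hyngt : un + 1 ≤ yn := y_gt_u ha h hyn1 heqn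
          have hyngt' : (un:ℤ) + 1 ≤ (yn:ℤ) := by exact_mod_cast hyngt
          have hue : (u:ℤ) = (2*(a:ℤ)+1)*(un:ℤ) - 2*(a:ℤ)*(yn:ℤ) := by
            rw [hrecu, hyval, ← hunz]; ring
          have h5 : (u:ℤ) ≤ (un:ℤ) - 2*(a:ℤ) := by nlinarith
          omega
      · have hyval : y' = (yn:ℤ) := by
          rw [hyn]; rcases Int.natAbs_eq y' with h | h <;> omega
        refine ⟨j+1, ?_, ?_⟩
        · have hgoal : (u:ℤ) = (U a (j+1) : ℤ) := by
            have hs := U_succ a j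
            zify at hs
            rw [hs, hrecu, hyval, ← hunz, hj1, hj2]
          exact_mod_cast hgoal
        · have hgoal : (y:ℤ) = (Yv a (j+1) : ℤ) := by
            have hs := Yv_succ a j
            zify at hs
            rw [hs, hrecy, hyval, ← hunz, hj1, hj2]
          exact_mod_cast hgoal

lemma U_ne_zero (a k : ℕ) : U a k ≠ 0 := by have := U_pos a k; omega

lemma fact_one {p W : ℕ} (hp : p.Prime) (hW : W ≠ 0) (h1 : p ∣ W) (h2 : ¬ p^2 ∣ W) :
    W.factorization p = 1 := by
  have hle : 1 ≤ W.factorization p := by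
    rw [← hp.pow_dvd_iff_le_factorization hW]; simpa using h1
  have hlt : W.factorization p < 2 := by
    by_contra hc
    push_neg at hc
    exact h2 ((hp.pow_dvd_iff_le_factorization hW).mpr hc)
  omega

lemma not_dvd_U {a p K : ℕ} (hp : p.Prime) (hdvd : p ∣ (a+1)) (hK : ¬ p ∣ (2*K+1)) :
    ¬ p ∣ U a K := by
  intro hd
  obtain ⟨t, ht⟩ := (modx a K).1
  have hd1 : (p:ℤ) ∣ (U a K : ℤ) := Int.natCast_dvd_natCast.mpr hd
  have hd2 : (p:ℤ) ∣ ((a:ℤ)+1) := by exact_mod_cast Int.natCast_dvd_natCast.mpr hdvd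
  have hd3 : (p:ℤ) ∣ (-1)^K*(2*(K:ℤ)+1) := by
    have : (-1:ℤ)^K*(2*(K:ℤ)+1) = (U a K : ℤ) - ((a:ℤ)+1)*t := by linarith [ht]
    rw [this]
    exact dvd_sub hd1 (Dvd.dvd.mul_right hd2 t)
  have hd4 : (p:ℤ) ∣ (2*(K:ℤ)+1) := by
    rcases Nat.even_or_odd K with he | ho
    · rw [he.neg_one_pow] at hd3; simpa using hd3
    · rw [ho.neg_one_pow, neg_one_mul, dvd_neg] at hd3
      exact hd3
  apply hK
  have : ((2*K+1 : ℕ) : ℤ) = 2*(K:ℤ)+1 := by push_cast; ring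
  exact_mod_cast hd4

lemma W_val {a' p j : ℕ} (hp : p.Prime) (h5 : 5 ≤ p) (hpj : p = 2*j+1)
    (hz : p ∣ (a'+1)) : p ∣ U a' j ∧ ¬ p^2 ∣ U a' j := by
  obtain ⟨t, ht⟩ := factB a' j
  set W := U a' j with hW
  set Z : ℤ := (a':ℤ)+1 with hZ
  have hzZ : (p:ℤ) ∣ Z := by rw [hZ]; exact_mod_cast hz
  have hp3 : ¬ (p:ℤ) ∣ 3 := by
    intro hc
    have : p ∣ 3 := by exact_mod_cast hc
    have := Nat.le_of_dvd (by norm_num) this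
    omega
  have hsign : ∀ X : ℤ, ((-1:ℤ))^j * X = X ∨ ((-1:ℤ))^j * X = -X := by
    intro X
    rcases Nat.even_or_odd j with he | ho
    · left; rw [he.neg_one_pow]; ring
    · right; rw [ho.neg_one_pow]; ring
  have h2 : (2*(j:ℤ)+1) = (p:ℤ) := by
    have : ((2*j+1 : ℕ) : ℤ) = (p:ℤ) := by rw [hpj]
    push_cast at this; linarith
  have hform : 3*(W:ℤ) = (-1)^j*(p:ℤ)*(3 - 2*j*(j+1)*Z) + Z^2*t := by
    rw [← h2]
    linear_combination ht
  constructor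
  · have hd3 : (p:ℤ) ∣ 3*(W:ℤ) := by
      rw [hform]
      apply dvd_add
      · rcases hsign ((p:ℤ)*(3 - 2*j*(j+1)*Z)) with h | h
        · rw [mul_assoc, h]; exact Dvd.dvd.mul_right dvd_rfl _
        · rw [mul_assoc, h]; exact (Dvd.dvd.mul_right dvd_rfl _).neg_right
      · exact Dvd.dvd.mul_right (dvd_pow hzZ (by norm_num)) t
    have : (p:ℤ) ∣ (W:ℤ) := by
      rcases (Int.Prime.dvd_mul' (by exact_mod_cast hp) hd3) with h | h
      · exact absurd h hp3
      · exact h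
    exact_mod_cast this
  · intro hc
    have hc2 : ((p:ℤ))^2 ∣ 3*(W:ℤ) := by
      have : ((p:ℤ))^2 ∣ (W:ℤ) := by exact_mod_cast Int.natCast_dvd_natCast.mpr hc
      exact Dvd.dvd.mul_left this 3
    have hc3 : ((p:ℤ))^2 ∣ (-1)^j*(p:ℤ)*(3 - 2*j*(j+1)*Z) := by
      have hz2 : ((p:ℤ))^2 ∣ Z^2*t := Dvd.dvd.mul_right (pow_dvd_pow_of_dvd hzZ 2) t
      have := dvd_sub hc2 hz2
      rw [hform] at this
      simpa using this
    have hc4 : (p:ℤ) ∣ (3 - 2*j*(j+1)*Z) := by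
      rcases hsign ((p:ℤ)*(3 - 2*j*(j+1)*Z)) with h | h
      · rw [mul_assoc, h] at hc3
        have hpne : (p:ℤ) ≠ 0 := by positivity
        rw [pow_two] at hc3
        exact (mul_dvd_mul_iff_left hpne).mp hc3
      · rw [mul_assoc, h, dvd_neg] at hc3
        have hpne : (p:ℤ) ≠ 0 := by positivity
        rw [pow_two] at hc3
        exact (mul_dvd_mul_iff_left hpne).mp hc3
    have : (p:ℤ) ∣ 3 := by
      have h1 : (p:ℤ) ∣ 2*j*(j+1)*Z := Dvd.dvd.mul_left hzZ _
      have := dvd_add hc4 h1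
      simpa using this
    exact hp3 this

lemma main_val (a p : ℕ) (hp : p.Prime) (hdvd : p ∣ (a+1)) (hcase : 5 ≤ p ∨ 9 ∣ (a+1)) :
    ∀ K, (U a K).factorization p = (2*K+1).factorization p := by
  intro K
  induction K using Nat.strong_induction_on with
  | _ K IH =>
    by_cases hK : p ∣ (2*K+1)
    · -- p odd since 2K+1 odd
      have hpodd : p ≠ 2 := by
        intro h2
        rw [h2] at hK
        omega
      have hp2 : 2 ≤ p := hp.two_le
      obtain ⟨j, hj⟩ : ∃ j, p = 2*j+1 := by
        rcases Nat.even_or_odd p with he | ho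
        · exfalso; exact hpodd (hp.even_iff.mp he)
        · obtain ⟨r, hr⟩ := ho
          exact ⟨r, by omega⟩
      have hj1 : 1 ≤ j := by omega
      obtain ⟨c, hc⟩ := hK
      have hcodd : c % 2 = 1 := by
        rcases Nat.even_or_odd c with he | ho
        · exfalso
          obtain ⟨d, hd⟩ := he
          rw [hd] at hc
          have hpd : p*(d+d) = 2*(p*d) := by ring
          omega
        · obtain ⟨m, hm⟩ := ho
          omega
      obtain ⟨k, hk⟩ : ∃ k, c = 2*k+1 := ⟨c/2, by omega⟩
      have hKk : K = (2*j+1)*k + j := by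
        have h1 : 2*K+1 = p*c := hc
        rw [hj, hk] at h1
        have h2 : (2*j+1)*(2*k+1) = 2*((2*j+1)*k+j)+1 := by ring
        omega
      have hklt : k < K := by
        have h3 : k ≤ (2*j+1)*k := Nat.le_mul_of_pos_left k (by omega)
        omega
      obtain ⟨comp1, _⟩ := composition a k j
      rw [← hKk] at comp1
      set a' := a*(Yv a k)^2 with ha'
      have hz : a'+1 = (a+1)*(U a k)^2 := by
        have := pell a k
        omega
      have hzdvd : p ∣ (a'+1) := by
        rw [hz]
        exact Dvd.dvd.mul_right hdvd _
      have hWfact : (U a' j).factorization p = 1 := by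
        by_cases hp5 : 5 ≤ p
        · obtain ⟨w1, w2⟩ := W_val hp hp5 hj hzdvd
          exact fact_one hp (U_ne_zero a' j) w1 w2
        · have hp3 : p = 3 := by
            have h2le := hp.two_le
            interval_cases p
            · exact absurd rfl hpodd
            · rfl
            · exact absurd hp (by norm_num)
          have h9 : 9 ∣ (a+1) := by
            rcases hcase with h5 | h9
            · omega
            · exact h9
          have hjval : j = 1 := by omega
          have hU1 : U a' 1 = 4*a'+1 := by
            rw [U_succ, U_zero, Yv_zero]; ring
          have h9z : 9 ∣ (a'+1) := by
            rw [hz]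
            exact Dvd.dvd.mul_right h9 _
          rw [hjval, hU1, hp3]
          obtain ⟨e, he⟩ := h9z
          have hd1 : 3 ∣ 4*a'+1 := by omega
          have hd2 : ¬ (3:ℕ)^2 ∣ 4*a'+1 := by
            rw [show (3:ℕ)^2 = 9 by norm_num]
            omega
          exact fact_one (by norm_num) (by omega) hd1 hd2
      have hmul : (U a K).factorization p
          = (U a k).factorization p + (U a' j).factorization p := by
        rw [comp1, Nat.factorization_mul (U_ne_zero a k) (U_ne_zero a' j)]
        simp
      have hrhs : (2*K+1).factorization p = 1 + (2*k+1).factorization p := by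
        have hKp : 2*K+1 = p*(2*k+1) := by rw [hc, hk]
        rw [hKp, Nat.factorization_mul hp.pos.ne' (by omega)]
        simp [hp.factorization_self]
      rw [hmul, IH k hklt, hWfact, hrhs]
      omega
    · rw [Nat.factorization_eq_zero_of_not_dvd hK,
        Nat.factorization_eq_zero_of_not_dvd (not_dvd_U hp hdvd hK)]

lemma U21 : U 2 1 = 9 := by rw [U_succ, U_zero, Yv_zero]
lemma Y21 : Yv 2 1 = 11 := by rw [Yv_succ, U_zero, Yv_zero]

lemma lemT : ∀ K m : ℕ, U 2 K = 3^m → (K = 0 ∧ m = 0) ∨ (K = 1 ∧ m = 2) := by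
  intro K
  induction K using Nat.strong_induction_on with
  | _ K IH =>
    intro m hm
    rcases Nat.eq_zero_or_pos K with h0 | hK1
    · left
      subst h0
      rw [U_zero] at hm
      have : m = 0 := by
        by_contra hc
        have : 3 ≤ 3^m := by
          calc (3:ℕ) = 3^1 := by norm_num
          _ ≤ 3^m := Nat.pow_le_pow_right (by norm_num) (by omega)
        omega
      exact ⟨rfl, this⟩
    · have hU9 : 9 ≤ U 2 K := by
        have h1 := U_ge_pow 2 K
        have h2 : (9:ℕ) = (4*2+1)^1 := by norm_num
        have h3 : (4*2+1)^1 ≤ (4*2+1)^K := Nat.pow_le_pow_right (by norm_num) hK1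
        omega
      have hm2 : 2 ≤ m := by
        by_contra hc
        push_neg at hc
        interval_cases m <;> simp_all <;> omega
      have h3dvd : 3 ∣ 2*K+1 := by
        by_contra hc
        apply not_dvd_U (p := 3) (a := 2) (by norm_num) (by norm_num) hc
        rw [hm]
        exact dvd_pow_self 3 (by omega)
      obtain ⟨k, hk⟩ : ∃ k, K = 3*k+1 := ⟨K/3, by omega⟩
      have hidx : K = (2*1+1)*k + 1 := by omega
      obtain ⟨comp1, _⟩ := composition 2 k 1
      rw [← hidx] at comp1
      set a' := 2*(Yv 2 k)^2 with ha'
      have hU1 : U a' 1 = 4*a'+1 := by rw [U_succ, U_zero, Yv_zero]; ring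
      rw [hU1] at comp1
      have hdvdk : U 2 k ∣ 3^m := ⟨4*a'+1, by rw [← hm, comp1]⟩
      obtain ⟨m1, hm1le, hm1⟩ := (Nat.dvd_prime_pow (by norm_num)).mp hdvdk
      have hkK : k < K := by omega
      rcases IH k hkK m1 hm1 with ⟨hk0, _⟩ | ⟨hk1, _⟩
      · right
        have hK1' : K = 1 := by omega
        rw [hK1', U21] at hm
        have hmval : m = 2 := by
          have h9 : (3:ℕ)^m = 3^2 := by rw [← hm]; norm_num
          exact Nat.pow_right_injective (by norm_num) h9
        exact ⟨hK1', hmval⟩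
      · exfalso
        have hav : a' = 242 := by rw [ha', hk1, Y21]; norm_num
        have hUk1 : U 2 k = 9 := by rw [hk1, U21]
        have h8721 : 3^m = 8721 := by
          rw [← hm, comp1, hav, hUk1]
        have h17 : (17:ℕ) ∣ 3^m := by rw [h8721]; norm_num
        have h17p : Nat.Prime 17 := by norm_num
        have := h17p.dvd_of_dvd_pow h17
        norm_num at this

lemma pow5 (m : ℕ) (hm : 1 ≤ m) : 2*m+1 ≤ 5^m := by
  induction m with
  | zero => omega
  | succ m ih =>
    rcases Nat.eq_zero_or_pos m with h0 | hp
    · subst h0; norm_num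
    · have h1 := ih hp
      have h2 : 5^(m+1) = 5*5^m := by ring
      have h3 : (1:ℕ) ≤ 5^m := Nat.one_le_pow _ _ (by norm_num)
      omega

end NL7

theorem stmt_7 (n s q : ℕ) (hn3 : 3 ≤ n) (hs : 2 ≤ s) (hn : n.Prime) (hq : q.Prime)
    (h : s ^ n - 1 = q ^ 2 * (s - 1)) : n = 5 ∧ s = 3 ∧ q = 11 := by
  obtain ⟨m, hm⟩ := hn.odd_of_ne_two (by omega)
  have hm1 : 1 ≤ m := by omega
  have hpow : s ^ n = q^2*(s-1) + 1 := by
    have h1 : 1 ≤ s^n := Nat.one_le_pow _ _ (by omega)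
    omega
  set a := s - 1 with ha
  have hsa : s = a + 1 := by omega
  have ha1 : 1 ≤ a := by omega
  have hsn : s^n = s * (s^m)^2 := by
    rw [hm, pow_succ, mul_comm 2 m, pow_mul]
    ring
  have hkey : (a+1) * ((a+1)^m)^2 = a * q^2 + 1 := by
    rw [← hsa, ← hsn, hpow]
    ring
  have hq1 : 1 ≤ q := hq.pos
  have hu1 : 1 ≤ (a+1)^m := Nat.one_le_pow _ _ (by omega)
  obtain ⟨K, hK1, hK2⟩ := NL7.classify a ha1 ((a+1)^m) q hu1 hq1 hkey
  have hKpos : 1 ≤ K := by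
    by_contra hc
    push_neg at hc
    interval_cases K
    · rw [NL7.U_zero] at hK1
      have h1 : (a+1) ≤ (a+1)^m := by
        calc a+1 = (a+1)^1 := (pow_one _).symm
        _ ≤ (a+1)^m := Nat.pow_le_pow_right (by omega) hm1
      omega
  -- s odd
  have hsodd : (a+1) % 2 = 1 := by
    have hUo := NL7.U_odd a K
    rw [← hK1] at hUo
    by_contra hc
    have h2 : 2 ∣ a+1 := by omega
    have h2m : 2 ∣ (a+1)^m := h2.trans (dvd_pow_self (a+1) (by omega))
    omega
  have ha2 : 2 ≤ a := by omega
  -- central contradiction for bad primes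
  have hcontra : ∀ p : ℕ, p.Prime → p ∣ (a+1) → (5 ≤ p ∨ 9 ∣ (a+1)) → False := by
    intro p hp hps hc5
    have hval := NL7.main_val a p hp hps hc5 K
    rw [← hK1, Nat.factorization_pow] at hval
    simp only [Finsupp.smul_apply, smul_eq_mul] at hval
    set v := (a+1).factorization p with hv
    have hv1 : 1 ≤ v := by
      rw [hv, ← hp.pow_dvd_iff_le_factorization (by omega)]
      simpa using hps
    have hdvd2 : p^(m*v) ∣ 2*K+1 := by
      rw [hp.pow_dvd_iff_le_factorization (by omega), ← hval]
    have hle : p^(m*v) ≤ 2*K+1 := Nat.le_of_dvd (by omega) hdvd2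
    have h5m : 5^m ≤ p^(m*v) := by
      have hmmv : m ≤ m*v := Nat.le_mul_of_pos_right m (by omega)
      rcases hc5 with h5 | h9
      · calc 5^m ≤ p^m := Nat.pow_le_pow_left h5 m
        _ ≤ p^(m*v) := Nat.pow_le_pow_right hp.pos hmmv
      · -- p = 3, v ≥ 2
        have hp3 : p = 3 ∨ 5 ≤ p := by
          have h2le := hp.two_le
          by_cases hb : p < 5
          · left
            interval_cases p
            · omega  -- p = 2 divides odd a+1
            · rfl
            · exact absurd hp (by norm_num)
          · right; omega
        rcases hp3 with h3 | h5
        · have hv2 : 2 ≤ v := by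
            rw [hv, ← hp.pow_dvd_iff_le_factorization (by omega), h3]
            rw [show (3:ℕ)^2 = 9 by norm_num]
            exact h9
          calc 5^m ≤ 9^m := Nat.pow_le_pow_left (by norm_num) m
          _ = (3^2)^m := by norm_num
          _ = 3^(2*m) := by rw [← pow_mul]
          _ ≤ 3^(m*v) := Nat.pow_le_pow_right (by norm_num) (by nlinarith)
          _ = p^(m*v) := by rw [h3]
        · calc 5^m ≤ p^m := Nat.pow_le_pow_left h5 m
          _ ≤ p^(m*v) := Nat.pow_le_pow_right hp.pos hmmv
    -- growth: m ≥ K+1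
    have hgrow : (4*a+1)^K ≤ (a+1)^m := by rw [hK1]; exact NL7.U_ge_pow a K
    have hmK : K+1 ≤ m := by
      by_contra hcm
      push_neg at hcm
      have hmle : m ≤ K := by omega
      have e1 : (3*(a+1))^K ≤ (4*a+1)^K := Nat.pow_le_pow_left (by omega) K
      have e2 : (3*(a+1))^K = 3^K*(a+1)^K := by rw [mul_pow]
      have e3 : (a+1)^m ≤ (a+1)^K := Nat.pow_le_pow_right (by omega) hmle
      have e4 : 3^K*(a+1)^K ≤ (a+1)^K := by omega
      have e5 : 3 ≤ 3^K := by
        calc (3:ℕ) = 3^1 := by norm_num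
        _ ≤ 3^K := Nat.pow_le_pow_right (by norm_num) hKpos
      have hone : 1 ≤ (a+1)^K := Nat.one_le_pow _ _ (by omega)
      have e6 : 3*(a+1)^K ≤ 3^K*(a+1)^K := Nat.mul_le_mul_right _ e5
      omega
    have := NL7.pow5 m hm1
    omega
  -- s = 3
  have hs3 : a + 1 = 3 := by
    have hall : ∀ d : ℕ, d.Prime → d ∣ (a+1) → d = 3 := by
      intro d hd hds
      by_contra hne
      have hd2 : d ≠ 2 := by
        intro h2
        rw [h2] at hds
        omega
      have hd5 : 5 ≤ d := by
        have h2le := hd.two_le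
        by_contra hb
        push_neg at hb
        interval_cases d
        · exact hd2 rfl
        · exact hne rfl
        · exact absurd hd (by norm_num)
      exact hcontra d hd hds (Or.inl hd5)
    have hspow := Nat.eq_prime_pow_of_unique_prime_dvd
      (show a+1 ≠ 0 by omega) (fun {d} hd hds => hall d hd hds)
    set e := (a+1).primeFactorsList.length with he
    have he1 : 1 ≤ e := by
      by_contra hc
      push_neg at hc
      have he0 : e = 0 := by omega
      rw [he0, pow_zero] at hspow
      omega
    have he2 : e < 2 := by
      by_contra hc
      push_neg at hc
      have h9 : 9 ∣ a+1 := by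
        rw [hspow]
        have : (3:ℕ)^2 ∣ 3^e := pow_dvd_pow 3 hc
        simpa using this
      exact hcontra 3 (by norm_num) (by rw [hspow]; exact dvd_pow_self 3 (by omega)) (Or.inr h9)
    have heval : e = 1 := by omega
    rw [heval, pow_one] at hspow
    exact hspow
  -- endgame with s = 3
  have ha3 : a = 2 := by omega
  rw [ha3] at hK1
  have hT := NL7.lemT K m (by rw [← hK1])
  rcases hT with ⟨_, hm0⟩ | ⟨hKv, hmv⟩
  · omega
  · have hn5 : n = 5 := by omega
    have hsv : s = 3 := by omega
    refine ⟨hn5, hsv, ?_⟩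
    have h5 : s^n = q^2*a + 1 := hpow
    rw [hsv, hn5, ha3] at h5
    have h121 : q^2 = 121 := by
      have h243 : (3:ℕ)^5 = 243 := by norm_num
      omega
    have h1111 : q^2 = 11^2 := by rw [h121]; norm_num
    exact Nat.pow_left_injective (by norm_num) h1111
end

section
/- If n is an integer with n ≥ 2 and s is a prime power such that (s^n − 1)/(s − 1) is a prime power, then n is prime. -/
/-!
Suppose `n = p * m` with `p` the least prime factor of `n` and `m ≥ 2`. Then
`[n]_s = [m]_s * [p]_{s^m}`, where `[k]_x = 1 + x + ⋯ + x^(k-1)`, and both factors exceed `1`,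
so the prime `q` divides both. From `q ∣ [m]_s` we get `s^m ≡ 1 (mod q)`, hence
`[p]_{s^m} ≡ p (mod q)` and `q = p`. As `p` is the least prime factor of `n`, `m` is coprime to
`q - 1`, so with Fermat `s ≡ 1 (mod q)`. Then `q² ∣ (s - 1) [m]_s = s^m - 1`, so
`[p]_{s^m} ≡ p (mod q²)`; but `[p]_{s^m} > q` is a power of `q`, so `q² ∣ p = q`, which is absurd.
-/

open Finset

theorem geom_sum_mul_geom_sum_pow {R : Type*} [CommSemiring R] (x : R) (m p : ℕ) :
    (∑ i ∈ range m, x ^ i) * ∑ i ∈ range p, (x ^ m) ^ i = ∑ i ∈ range (m * p), x ^ i := by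
  induction p with
  | zero => simp
  | succ p ih =>
    rw [sum_range_succ, mul_add, ih, Nat.mul_succ, sum_range_add, sum_mul]
    congr 1
    exact sum_congr rfl fun i _ => by ring

namespace Nat

theorem sub_one_mul_geom_sum (x n : ℕ) : (x - 1) * ∑ i ∈ range n, x ^ i = x ^ n - 1 := by
  rcases x with _ | x
  · cases n <;> simp
  · rw [Nat.add_sub_cancel, ← geom_sum_mul_add x n, Nat.add_sub_cancel, mul_comm]

theorem lt_geom_sum (x : ℕ) {n : ℕ} (hn : 2 ≤ n) : x < ∑ i ∈ range n, x ^ i :=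
  calc x < ∑ i ∈ range 2, x ^ i := by simp [sum_range_succ]
    _ ≤ ∑ i ∈ range n, x ^ i := sum_le_sum_of_subset (range_subset_range.mpr hn)

theorem dvd_of_dvd_geom_sum_of_modEq_one {x k n : ℕ} (h : x ≡ 1 [MOD k])
    (hk : k ∣ ∑ i ∈ range n, x ^ i) : k ∣ n := by
  have hsum : ∑ i ∈ range n, x ^ i ≡ n [MOD k] := by
    rw [← ZMod.natCast_eq_natCast_iff] at h ⊢
    push_cast [h]
    simp
  exact (hsum.dvd_iff dvd_rfl).mp hk

theorem pow_modEq_one_of_dvd_sub_one_mul_geom_sum {x k m : ℕ} (hx : 0 < x)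
    (h : k ∣ (x - 1) * ∑ i ∈ range m, x ^ i) : x ^ m ≡ 1 [MOD k] := by
  rw [sub_one_mul_geom_sum] at h
  exact ((modEq_iff_dvd' (one_le_pow m x hx)).mpr h).symm

theorem Prime.pow_succ_dvd_of_pow_lt_of_dvd_pow {q a k d : ℕ} (hq : q.Prime) (hd : d ∣ q ^ a)
    (hlt : q ^ k < d) : q ^ (k + 1) ∣ d := by
  obtain ⟨i, -, rfl⟩ := (dvd_prime_pow hq).mp hd
  exact pow_dvd_pow q ((Nat.pow_lt_pow_iff_right hq.one_lt).mp hlt)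

theorem coprime_minFac_sub_one (n : ℕ) : n.Coprime (n.minFac - 1) := by
  rcases lt_or_ge n 2 with hn | hn
  · interval_cases n <;> simp
  refine coprime_of_dvd fun r hr hrn hrp => ?_
  have hpr : n.minFac ≤ r := minFac_le_of_dvd hr.two_le hrn
  have hp : 2 ≤ n.minFac := (minFac_prime (by omega)).two_le
  have := le_of_dvd (by omega) hrp
  omega

theorem modEq_one_of_pow_modEq_one_of_coprime {q m x : ℕ} (hq : q.Prime) (hm : m ≠ 0)
    (hc : m.Coprime (q - 1)) (h : x ^ m ≡ 1 [MOD q]) : x ≡ 1 [MOD q] := by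
  have := Fact.mk hq
  rw [← ZMod.natCast_eq_natCast_iff] at h ⊢
  push_cast at h ⊢
  have hx0 : (x : ZMod q) ≠ 0 := fun h0 => by simp [h0, hm] at h
  have := pow_gcd_eq_one.mpr ⟨h, ZMod.pow_card_sub_one_eq_one hx0⟩
  rwa [hc.gcd_eq_one, pow_one] at this

theorem prime_of_geom_sum_eq_prime_pow {s n q a : ℕ} (hs : 1 < s) (hn : 2 ≤ n) (hq : q.Prime)
    (h : ∑ i ∈ range n, s ^ i = q ^ a) : n.Prime := by
  by_contra hnp
  set p := n.minFac
  have hp : p.Prime := minFac_prime (by omega)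
  obtain ⟨m, hnm⟩ : p ∣ n := minFac_dvd n
  have hm : 2 ≤ m := by
    by_contra! hm
    interval_cases m
    · omega
    · exact hnp (by rwa [hnm, mul_one])
  set A := ∑ i ∈ range m, s ^ i
  set B := ∑ i ∈ range p, (s ^ m) ^ i
  have hAB : A * B = q ^ a := by rw [geom_sum_mul_geom_sum_pow, mul_comm, ← hnm, h]
  have hsA : s < A := lt_geom_sum s hm
  have hsB : s < B := (Nat.le_self_pow (by omega) s).trans_lt (lt_geom_sum _ hp.two_le)
  have hqA : q ∣ A := by
    simpa using hq.pow_succ_dvd_of_pow_lt_of_dvd_pow (k := 0) (Dvd.intro B hAB) (by simp; omega)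
  have hqB : q ∣ B := by
    simpa using hq.pow_succ_dvd_of_pow_lt_of_dvd_pow (k := 0) (Dvd.intro_left A hAB)
      (by simp; omega)
  have hsm : s ^ m ≡ 1 [MOD q] :=
    pow_modEq_one_of_dvd_sub_one_mul_geom_sum (by omega) (dvd_mul_of_dvd_right hqA _)
  have hqp : q = p :=
    (prime_dvd_prime_iff_eq hq hp).mp (dvd_of_dvd_geom_sum_of_modEq_one hsm hqB)
  have hcop : m.Coprime (q - 1) :=
    hqp ▸ (coprime_minFac_sub_one n).coprime_dvd_left (Dvd.intro_left p hnm.symm)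
  have hqs : q ∣ s - 1 :=
    (modEq_iff_dvd' hs.le).mp (modEq_one_of_pow_modEq_one_of_coprime hq (by omega) hcop hsm).symm
  have hsm2 : s ^ m ≡ 1 [MOD q ^ 2] :=
    pow_modEq_one_of_dvd_sub_one_mul_geom_sum (by omega) (sq q ▸ mul_dvd_mul hqs hqA)
  have hq2B : q ^ 2 ∣ B := by
    have := le_of_dvd (by omega) hqs
    exact hq.pow_succ_dvd_of_pow_lt_of_dvd_pow (k := 1) (Dvd.intro_left A hAB) (by simp; omega)
  have hq2p : q ^ 2 ∣ p := dvd_of_dvd_geom_sum_of_modEq_one hsm2 hq2B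
  have := le_of_dvd hp.pos hq2p
  nlinarith [hq.two_le]

end Nat

theorem stmt_8 (n s : ℕ) (hn : 2 ≤ n) (hs : IsPrimePow s)
    (h : ∃ q a : ℕ, q.Prime ∧ 0 < a ∧ s ^ n - 1 = q ^ a * (s - 1)) :
    n.Prime := by
  obtain ⟨q, a, hq, -, heq⟩ := h
  refine Nat.prime_of_geom_sum_eq_prime_pow (a := a) hs.one_lt hn hq ?_
  refine Nat.eq_of_mul_eq_mul_left (Nat.sub_pos_of_lt hs.one_lt) ?_
  rw [Nat.sub_one_mul_geom_sum, heq, mul_comm]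
end

section
/- In the affine special linear group G = ASL(2,3), every maximal subgroup has index 3, 4, or 9, yet G/F(G) ≅ SL_2(3) is not supersolvable. -/
/-!
The translation subgroup `T ≅ 𝔽₃²` of `G = ASL(2,3)` is an abelian normal subgroup with
`G / T ≅ SL₂(3)`. Every nontrivial normal subgroup of `SL₂(3)` contains `-1`, so a normal
subgroup `N ⊄ T` contains some `(u, -1)`; commutators with it square translations, and since
squaring is bijective on `𝔽₃²` this puts `T` into every term of the lower central series of `N`.
Hence `F(G) = T`. A maximal subgroup `M` either contains `T`, and then corresponds to a
maximal subgroup of `SL₂(3)` (`Q₈` of index 3 or a `C₆` of index 4), or it complements `T`: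
`M ∩ T` is normalised by `M` and centralised by `T`, hence normal, and `SL₂(3)` is transitive
on nonzero vectors, so `M ∩ T = 1` and `M` has index `|T| = 9`. Finally `SL₂(3)` is not
supersolvable: its only normal cyclic subgroups lie in `{±1}`, and `{±1}` together with any
element lies in a cyclic subgroup, so a cyclic normal series never leaves `{±1}`.
-/

open Matrix

/-- The vector group `(ZMod 3)²`, written multiplicatively. -/
abbrev V23 : Type := Multiplicative (Fin 2 → ZMod 3)

/-- A linear automorphism of `(ZMod 3)²` as a multiplicative automorphism of `V23`. -/
def linToMulAut : ((Fin 2 → ZMod 3) ≃ₗ[ZMod 3] (Fin 2 → ZMod 3)) →* MulAut V23 where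
  toFun e := AddEquiv.toMultiplicative e.toAddEquiv
  map_one' := by ext x; rfl
  map_mul' e f := by ext x; rfl

/-- The natural action of `SL₂(3)` on `(ZMod 3)²` by multiplicative automorphisms. -/
def aslAction : SpecialLinearGroup (Fin 2) (ZMod 3) →* MulAut V23 :=
  linToMulAut.comp SpecialLinearGroup.toLin'

/-- The affine special linear group `ASL(2,3) = (ZMod 3)² ⋊ SL₂(3)`. -/
abbrev ASL23 : Type := V23 ⋊[aslAction] SpecialLinearGroup (Fin 2) (ZMod 3)

/-- The Fitting subgroup: the join of all nilpotent normal subgroups. -/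
def fittingSubgroup (G : Type*) [Group G] : Subgroup G :=
  ⨆ N : {N : Subgroup G // N.Normal ∧ Group.IsNilpotent N}, (N : Subgroup G)

instance fittingSubgroup_normal (G : Type*) [Group G] : (fittingSubgroup G).Normal := by
  constructor
  intro x hx g
  refine Subgroup.iSup_induction _ (C := fun y => g * y * g⁻¹ ∈ fittingSubgroup G) hx
    (fun N y hy => ?_) (by simpa using Subgroup.one_mem _) (fun a b ha hb => ?_)
  · exact le_iSup (fun N : {N : Subgroup G // N.Normal ∧ Group.IsNilpotent N} =>
      (N : Subgroup G)) N (N.2.1.conj_mem y hy g)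
  · show g * (a * b) * g⁻¹ ∈ fittingSubgroup G
    have h : g * (a * b) * g⁻¹ = (g * a * g⁻¹) * (g * b * g⁻¹) := by group
    rw [h]; exact Subgroup.mul_mem _ ha hb

/-- Supersolvability: there is a chain of normal subgroups with cyclic factors. -/
def IsSupersolvable (G : Type*) [Group G] : Prop :=
  ∃ (n : ℕ) (c : Fin (n + 1) → Subgroup G), c 0 = ⊥ ∧ c (Fin.last n) = ⊤ ∧
    (∀ i : Fin n, c i.castSucc ≤ c i.succ) ∧ (∀ i, (c i).Normal) ∧
    ∀ i : Fin n, ∃ g : G, c i.succ = c i.castSucc ⊔ Subgroup.closure {g}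

open Subgroup
open scoped commutatorElement

theorem mem_zpowers_iff_exists_pow_of_pow_eq_one {G : Type*} [Group G] {x y : G} {n : ℕ}
    (hn : 0 < n) (hx : x ^ n = 1) : y ∈ zpowers x ↔ ∃ k < n, x ^ k = y := by
  refine ⟨?_, fun ⟨k, _, hk⟩ => hk ▸ pow_mem (mem_zpowers x) k⟩
  rintro ⟨m, rfl⟩
  have hmod : 0 ≤ m % n := Int.emod_nonneg m (by omega)
  have hlt : m % n < n := Int.emod_lt_of_pos m (by omega)
  refine ⟨(m % n).toNat, by omega, ?_⟩
  rw [← zpow_natCast, Int.toNat_of_nonneg hmod, ← zpow_eq_zpow_emod' m hx]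

theorem Subgroup.isCoatom_map_of_ker_le {G H : Type*} [Group G] [Group H] {φ : G →* H}
    (hφ : Function.Surjective φ) {M : Subgroup G} (hker : φ.ker ≤ M) (hM : IsCoatom M) :
    IsCoatom (M.map φ) := by
  rw [← comap_map_eq_self hker] at hM
  refine ⟨fun h => hM.1 (by rw [h, comap_top]), fun K hK => ?_⟩
  have := hM.2 (K.comap φ) ((comap_lt_comap_of_surjective hφ).mpr hK)
  rwa [← comap_top φ, (comap_injective hφ).eq_iff] at this

theorem Subgroup.inf_normal_of_sup_eq_top {G : Type*} [Group G] (M A : Subgroup G) [A.Normal]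
    [IsMulCommutative A] (h : M ⊔ A = ⊤) : (M ⊓ A).Normal := by
  rw [← normalizer_eq_top_iff, eq_top_iff, ← h]
  refine sup_le ((le_inf M.le_normalizer le_normalizer_of_normal).trans
    inf_normalizer_le_normalizer_inf) ?_
  exact (le_centralizer A).trans ((centralizer_le inf_le_right).trans (centralizer_le_normalizer _))

theorem Subgroup.eq_one_of_forall_exists_commutator_eq {G : Type*} [Group G] {N : Subgroup G}
    [Group.IsNilpotent N] {S : Set G} (hSN : S ⊆ N) (hS : ∀ s ∈ S, ∃ t ∈ S, ∃ g ∈ N, ⁅t, g⁆ = s) :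
    ∀ s ∈ S, s = 1 := by
  have hlcs : ∀ k, S ⊆ N.lowerCentralSeries k := by
    intro k
    induction k with
    | zero => exact hSN
    | succ k ih =>
      intro s hs
      obtain ⟨t, ht, g, hg, rfl⟩ := hS s hs
      exact commutator_mem_commutator (ih ht) hg
  obtain ⟨k, hk⟩ := (isNilpotent_iff_lowerCentralSeries N).mp ‹_›
  intro s hs
  simpa [hk] using hlcs k hs

theorem IsSupersolvable.of_mulEquiv {G H : Type*} [Group G] [Group H] (e : G ≃* H)
    (h : IsSupersolvable G) : IsSupersolvable H := by
  obtain ⟨n, c, h0, hlast, hmono, hnormal, hstep⟩ := h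
  refine ⟨n, fun i => (c i).map e.toMonoidHom, ?_, ?_,
    fun i => map_mono (hmono i), fun i => (hnormal i).map _ e.surjective, fun i => ?_⟩
  · dsimp only; rw [h0, Subgroup.map_bot]
  · dsimp only; rw [hlast]; exact map_top_of_surjective _ e.surjective
  · obtain ⟨g, hg⟩ := hstep i
    refine ⟨e g, ?_⟩
    dsimp only
    rw [hg, Subgroup.map_sup, MonoidHom.map_closure, Set.image_singleton]
    rfl

abbrev SL23 : Type := SpecialLinearGroup (Fin 2) (ZMod 3)

namespace SL23

instance : Fact (Even (Fintype.card (Fin 2))) := ⟨even_two⟩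

theorem card_eq : Nat.card SL23 = 24 := by
  rw [Nat.card_eq_fintype_card]; decide

theorem orderOf_neg_one : orderOf (-1 : SL23) = 2 :=
  orderOf_eq_prime (by decide) (by decide)

theorem mem_zpowers_iff {x y : SL23} : y ∈ zpowers x ↔ ∃ k < 12, x ^ k = y :=
  mem_zpowers_iff_exists_pow_of_pow_eq_one (by norm_num) (by revert x; decide)

theorem exists_sq_mul_sq (g : SL23) : ∃ a b : SL23, a ^ 2 * b ^ 2 = g := by
  revert g; decide

theorem index_ne_two (H : Subgroup SL23) : H.index ≠ 2 := by
  intro h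
  have : H = ⊤ := (eq_top_iff' H).mpr fun g => by
    obtain ⟨a, b, rfl⟩ := exists_sq_mul_sq g
    exact mul_mem (sq_mem_of_index_two h a) (sq_mem_of_index_two h b)
  rw [this, index_top] at h
  exact absurd h (by norm_num)

/-- The quaternion subgroup, which in `SL₂(3)` is the solution set of `g ^ 4 = 1`. -/
def Q8 : Subgroup SL23 where
  carrier := {g | g ^ 4 = 1}
  mul_mem' {a b} := by revert a b; decide
  one_mem' := one_pow 4
  inv_mem' {a} (ha : a ^ 4 = 1) := show a⁻¹ ^ 4 = 1 by rw [inv_pow, ha, inv_one]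

instance : DecidablePred (· ∈ Q8) := fun g => inferInstanceAs (Decidable (g ^ 4 = 1))

theorem card_Q8 : Nat.card Q8 = 8 := by
  rw [Nat.card_eq_fintype_card]; decide

theorem le_Q8_of_card_dvd_four {H : Subgroup SL23} (h : Nat.card H ∣ 4) : H ≤ Q8 := fun x hx => by
  obtain ⟨k, hk⟩ := h
  have : (⟨x, hx⟩ : H) ^ 4 = 1 := by rw [hk, pow_mul, pow_card_eq_one', one_pow]
  exact congrArg Subtype.val this

theorem pow_three_mul_neg_one {x : SL23} (hx : x ^ 3 = 1) :
    (x * -1) ^ 4 = x ∧ (x * -1) ^ 3 = -1 ∧ (x * -1) ^ 6 = 1 := by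
  revert x; decide

theorem card_ne_three_of_isCoatom {H : Subgroup SL23} (hH : IsCoatom H) : Nat.card H ≠ 3 := by
  intro hc
  obtain ⟨x, hxH, hx1⟩ := H.bot_or_exists_ne_one.resolve_left fun h => by
    rw [h, card_bot] at hc; norm_num at hc
  have hx3 : x ^ 3 = 1 := by
    have : (⟨x, hxH⟩ : H) ^ Nat.card H = 1 := pow_card_eq_one'
    rw [hc] at this
    exact congrArg Subtype.val this
  obtain ⟨hy4, hy3, hy6⟩ := pow_three_mul_neg_one hx3
  have hHx : zpowers x = H := eq_of_le_of_card_ge (zpowers_le.mpr hxH) <| by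
    rw [Nat.card_zpowers, orderOf_eq_prime hx3 hx1, hc]
  have hx : x ∈ zpowers (x * -1) := by
    simpa only [hy4] using pow_mem (mem_zpowers (x * -1)) 4
  -- `H = ⟨x⟩` sits inside the cyclic group `⟨-x⟩` of order 6
  rcases hH.le_iff.mp (hHx ▸ zpowers_le.mpr hx) with htop | heq
  · have := orderOf_dvd_of_pow_eq_one hy6
    rw [← Nat.card_zpowers, htop, card_top, card_eq] at this
    norm_num at this
  · have hneg : (-1 : SL23) ∈ H := by
      simpa only [heq, hy3] using pow_mem (mem_zpowers (x * -1)) 3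
    have := orderOf_dvd_natCard (⟨-1, hneg⟩ : H)
    rw [Subgroup.orderOf_mk, orderOf_neg_one, hc] at this
    norm_num at this

theorem index_of_isCoatom {H : Subgroup SL23} (hH : IsCoatom H) : H.index = 3 ∨ H.index = 4 := by
  have hmul : Nat.card H * H.index = 24 := card_eq ▸ H.card_mul_index
  have hdiv : H.index ∈ Nat.divisors 24 :=
    Nat.mem_divisors.mpr ⟨Dvd.intro_left _ hmul, by norm_num⟩
  have hQ8 : ¬ Nat.card H ∣ 4 := fun h => by
    rcases hH.le_iff.mp (le_Q8_of_card_dvd_four h) with htop | heq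
    · have := card_Q8; rw [htop, card_top, card_eq] at this; norm_num at this
    · rw [← heq, card_Q8] at h; norm_num at h
  rw [show Nat.divisors 24 = {1, 2, 3, 4, 6, 8, 12, 24} by decide] at hdiv
  simp only [Finset.mem_insert, Finset.mem_singleton] at hdiv
  rcases hdiv with h | h | h | h | h | h | h | h
  · exact absurd (index_eq_one.mp h) hH.1
  · exact absurd h (index_ne_two H)
  · exact .inl h
  · exact .inr h
  all_goals rw [h] at hmul
  · exact absurd ⟨1, by omega⟩ hQ8
  · exact absurd (by omega) (card_ne_three_of_isCoatom hH)
  · exact absurd ⟨2, by omega⟩ hQ8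
  · exact absurd ⟨4, by omega⟩ hQ8

theorem exists_pow_mul_conj_pow_eq_neg_one {s : SL23} (hs : s ≠ 1) :
    ∃ k : SL23, ∃ m < 3, ∃ n < 3, (s ^ m * (k * s * k⁻¹)) ^ n = -1 := by
  revert s; decide

theorem neg_one_mem_of_normal {N : Subgroup SL23} (hN : N.Normal) (hne : N ≠ ⊥) : -1 ∈ N := by
  obtain ⟨s, hs, hs1⟩ := N.bot_or_exists_ne_one.resolve_left hne
  obtain ⟨k, m, -, n, -, h⟩ := exists_pow_mul_conj_pow_eq_neg_one hs1
  exact h ▸ pow_mem (mul_mem (pow_mem hs m) (hN.conj_mem s hs k)) n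

theorem eq_one_or_neg_one_of_forall_conj_eq_pow (y : SL23)
    (h : ∀ g : SL23, ∃ k < 12, y ^ k = g * y * g⁻¹) : y = 1 ∨ y = -1 := by
  revert y; decide

theorem le_zpowers_neg_one_of_isCyclic {H : Subgroup SL23} (hN : H.Normal) (hC : IsCyclic H) :
    H ≤ zpowers (-1) := by
  obtain ⟨y, rfl⟩ := (Subgroup.isCyclic_iff_exists_zpowers_eq_top H).mp hC
  rcases eq_one_or_neg_one_of_forall_conj_eq_pow y fun g =>
    mem_zpowers_iff.mp (hN.conj_mem y (mem_zpowers y) g) with rfl | rfl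
  · simp
  · exact le_rfl

theorem exists_pow_eq_neg_one_and_pow_eq (g : SL23) :
    ∃ h : SL23, (∃ k < 12, h ^ k = -1) ∧ ∃ k < 12, h ^ k = g := by
  revert g; decide

theorem not_isSupersolvable : ¬ IsSupersolvable SL23 := by
  rintro ⟨n, c, h0, hlast, -, hnormal, hstep⟩
  have hle : ∀ i, c i ≤ zpowers (-1) := by
    intro i
    induction i using Fin.induction with
    | zero => exact h0 ▸ bot_le
    | succ i ih =>
      obtain ⟨g, hg⟩ := hstep i
      obtain ⟨h, hneg, hgh⟩ := exists_pow_eq_neg_one_and_pow_eq g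
      have hcyc : c i.succ ≤ zpowers h := by
        rw [hg, ← zpowers_eq_closure]
        exact sup_le (ih.trans (zpowers_le.mpr (mem_zpowers_iff.mpr hneg)))
          (zpowers_le.mpr (mem_zpowers_iff.mpr hgh))
      exact le_zpowers_neg_one_of_isCyclic (hnormal _) (isCyclic_of_le hcyc)
  have := card_le_of_le (hlast ▸ hle (Fin.last n))
  rw [card_top, card_eq, Nat.card_zpowers, orderOf_neg_one] at this
  norm_num at this

end SL23

namespace ASL23

open SemidirectProduct

instance : DecidableEq V23 := inferInstanceAs (DecidableEq (Fin 2 → ZMod 3))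

def translations : Subgroup ASL23 := (rightHom : ASL23 →* SL23).ker

instance : translations.Normal := MonoidHom.normal_ker _

theorem range_inl : (inl : V23 →* ASL23).range = translations := range_inl_eq_ker_rightHom

theorem card_translations : Nat.card translations = 9 := by
  rw [← range_inl, ← Nat.card_congr (MonoidHom.ofInjective inl_injective).toEquiv,
    Nat.card_eq_fintype_card]
  rfl

instance : IsMulCommutative translations := range_inl ▸ inferInstance

instance : Group.IsNilpotent translations :=
  ⟨1, upperCentralSeries_one_eq_top_iff.mpr inferInstance⟩

theorem exists_aslAction_eq {v w : V23} (hv : v ≠ 1) (hw : w ≠ 1) :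
    ∃ A : SL23, aslAction A v = w := by
  revert v w; decide

theorem translations_le_of_inl_mem {N : Subgroup ASL23} (hN : N.Normal) {v : V23} (hv : v ≠ 1)
    (hvN : inl v ∈ N) : translations ≤ N := by
  rw [← range_inl]
  rintro _ ⟨w, rfl⟩
  by_cases hw : w = 1
  · rw [hw, map_one]; exact one_mem N
  obtain ⟨A, rfl⟩ := exists_aslAction_eq hv hw
  have := hN.conj_mem _ hvN (inr A)
  rwa [← map_inv, ← inl_aut] at this

theorem commutator_inl_sq_mk_neg_one (u w : V23) :
    ⁅(inl (w ^ 2) : ASL23), (⟨u, -1⟩ : ASL23)⁆ = inl w := by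
  have hinv : (-1 : SL23)⁻¹ = -1 := by decide
  have hact : ∀ v : V23, aslAction (-1) v = v⁻¹ := by decide
  have hw : w ^ 2 * w ^ 2 = w := by revert w; decide
  refine SemidirectProduct.ext ?_ ?_
  · simp only [commutatorElement_def, mul_left, inv_left, left_inl, right_inl, inv_right,
      mul_right, map_one, MulAut.one_apply, one_mul, mul_one, inv_one, hinv, hact, inv_inv]
    rw [mul_right_comm (w ^ 2 * u), mul_inv_cancel_right, hw]
  · simp only [commutatorElement_def, mul_right, inv_right, right_inl, hinv]
    decide

theorem exists_mk_neg_one_mem {N : Subgroup ASL23} (hN : N.Normal) (h : ¬ N ≤ translations) :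
    ∃ u : V23, (⟨u, -1⟩ : ASL23) ∈ N := by
  have hne : N.map rightHom ≠ ⊥ := fun h' => h ((map_eq_bot_iff N).mp h')
  obtain ⟨x, hx, hxr⟩ := SL23.neg_one_mem_of_normal (hN.map _ rightHom_surjective) hne
  refine ⟨x.left, ?_⟩
  rw [rightHom_eq_right] at hxr
  rwa [← hxr]

theorem translations_le_of_mk_neg_one_mem {N : Subgroup ASL23} (hN : N.Normal) {u : V23}
    (hu : (⟨u, -1⟩ : ASL23) ∈ N) : translations ≤ N := by
  have hv : (Multiplicative.ofAdd ![1, 0] : V23) ≠ 1 := by decide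
  refine translations_le_of_inl_mem hN hv ?_
  rw [← commutator_inl_sq_mk_neg_one u, commutatorElement_def]
  exact mul_mem (hN.conj_mem _ hu _) (inv_mem hu)

theorem le_translations_of_isNilpotent {N : Subgroup ASL23} (hN : N.Normal)
    [Group.IsNilpotent N] : N ≤ translations := by
  by_contra h
  obtain ⟨u, hu⟩ := exists_mk_neg_one_mem hN h
  have hT : Set.range inl ⊆ (N : Set ASL23) := by
    rw [← MonoidHom.coe_range, range_inl]; exact translations_le_of_mk_neg_one_mem hN hu
  have htriv := eq_one_of_forall_exists_commutator_eq hT fun _ ⟨w, hw⟩ =>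
    ⟨inl (w ^ 2), ⟨_, rfl⟩, _, hu, hw ▸ commutator_inl_sq_mk_neg_one u w⟩
  have h1 := htriv (inl (Multiplicative.ofAdd ![1, 0])) ⟨_, rfl⟩
  exact absurd ((map_eq_one_iff _ inl_injective).mp h1) (by decide)

theorem fittingSubgroup_eq : fittingSubgroup ASL23 = translations :=
  le_antisymm (iSup_le fun N => have := N.2.2; le_translations_of_isNilpotent N.2.1)
    (le_iSup (fun N : {N : Subgroup ASL23 // N.Normal ∧ Group.IsNilpotent N} =>
      (N : Subgroup ASL23)) ⟨translations, inferInstance, inferInstance⟩)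

noncomputable def quotientFittingEquiv : (ASL23 ⧸ fittingSubgroup ASL23) ≃* SL23 :=
  (QuotientGroup.quotientMulEquivOfEq fittingSubgroup_eq).trans
    (QuotientGroup.quotientKerEquivOfSurjective _ rightHom_surjective)

theorem index_of_isCoatom_of_le {M : Subgroup ASL23} (hM : IsCoatom M) (hT : translations ≤ M) :
    M.index = 3 ∨ M.index = 4 := by
  rw [← index_map_eq M rightHom_surjective hT]
  exact SL23.index_of_isCoatom (isCoatom_map_of_ker_le rightHom_surjective hT hM)

theorem index_of_isCoatom_of_not_le {M : Subgroup ASL23} (hM : IsCoatom M)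
    (hT : ¬ translations ≤ M) : M.index = 9 := by
  have hsup : M ⊔ translations = ⊤ := hM.2 _ (left_lt_sup.mpr hT)
  have hbot : M ⊓ translations = ⊥ := by
    by_contra hne
    obtain ⟨x, hx, hx1⟩ := (M ⊓ translations).bot_or_exists_ne_one.resolve_left hne
    obtain ⟨v, rfl⟩ : x ∈ (inl : V23 →* ASL23).range := range_inl ▸ hx.2
    have hv : v ≠ 1 := fun h => hx1 (by rw [h, map_one])
    exact hT ((translations_le_of_inl_mem (inf_normal_of_sup_eq_top M _ hsup) hv hx).trans
      inf_le_left)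
  have hc : IsComplement' translations M := isComplement'_of_disjoint_and_mul_eq_univ
    (disjoint_iff.mpr (inf_comm M _ ▸ hbot)) (by rw [← normal_mul, sup_comm, hsup]; rfl)
  rw [hc.index_eq_card, card_translations]

end ASL23

theorem stmt_13 :
    (∀ M : Subgroup ASL23, IsCoatom M → M.index = 3 ∨ M.index = 4 ∨ M.index = 9) ∧
    Nonempty ((ASL23 ⧸ fittingSubgroup ASL23) ≃* SpecialLinearGroup (Fin 2) (ZMod 3)) ∧
    ¬ IsSupersolvable (ASL23 ⧸ fittingSubgroup ASL23) := by
  refine ⟨fun M hM => ?_, ⟨ASL23.quotientFittingEquiv⟩,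
    fun h => SL23.not_isSupersolvable (h.of_mulEquiv ASL23.quotientFittingEquiv)⟩
  by_cases hT : ASL23.translations ≤ M
  · exact (ASL23.index_of_isCoatom_of_le hM hT).imp_right .inl
  · exact .inr (.inr (ASL23.index_of_isCoatom_of_not_le hM hT))
end
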